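/- For a fibrewise space X over B, the sequential parametrized topological complexity TC_{B,r}(X) := secat_B(Π_{r,X}) equals D_B(pr_1,...,pr_r), where pr_i : X_B^r → X are the projections of the r-fold fibred product. -/

import Mathlib

/-!
Both invariants are infima over open covers of `X_B^r`, so it suffices to compare the two
conditions on a single open set `U`. If `s` is a fibrewise homotopy section of `Π_{r,X}` over
`U`, then each `pr_i` is fibrewise homotopic to `v ↦ γ_v(t_i)` with `γ_v = s(v)`, and sliding
`t_i` to `t_j` along `γ_v` connects any two coordinates. Conversely, if every `pr_i` is
fibrewise homotopic to `pr_1` on `U`, the constant path at `v_1` is a section: `Π_{r,X} ∘ s`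
is the diagonal `(v_1, …, v_1)`, and the homotopies `pr_1 ≃ pr_i` assemble coordinatewise into
a fibrewise homotopy to the inclusion, which stays in `X_B^r` because each one is fibrewise.
-/

open Set

/-- Two continuous maps are fibrewise homotopic over `B`: there is a homotopy
whose every time-slice commutes with the projections to `B`. -/
def FibHomotopic {B X Y : Type*} [TopologicalSpace B] [TopologicalSpace X] [TopologicalSpace Y]
    (pX : X → B) (pY : Y → B) (f g : C(X, Y)) : Prop :=
  ∃ H : f.Homotopy g, ∀ (x : X) (t : unitInterval), pY (H (t, x)) = pX x

/-- Sequential parametrized homotopic distance of a family of fibrewise maps: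
the least `n` such that `X` admits an open cover by `n + 1` open sets on each of
which all the maps are pairwise fibrewise homotopic (`∞` if none exists). -/
noncomputable def fibDist {B X Y ι : Type*} [TopologicalSpace B] [TopologicalSpace X]
    [TopologicalSpace Y] (pX : X → B) (pY : Y → B) (f : ι → C(X, Y)) : ℕ∞ :=
  sInf {n : ℕ∞ | ∃ k : ℕ, (k : ℕ∞) = n ∧ ∃ U : Fin (k + 1) → Set X,
    (∀ i, IsOpen (U i)) ∧ (⋃ i, U i) = Set.univ ∧
    ∀ i s t, FibHomotopic (fun x : U i => pX (x : X)) pY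
      ((f s).restrict (U i)) ((f t).restrict (U i))}

/-- Fibrewise sectional category of a fibrewise map `f : E → X` over `B`: the least `k`
such that `X` has an open cover by `k + 1` open sets, each admitting a fibrewise map
`s : U → E` with `f ∘ s` fibrewise homotopic to the inclusion. -/
noncomputable def fibSecat {B E X : Type*} [TopologicalSpace B] [TopologicalSpace E]
    [TopologicalSpace X] (pE : E → B) (pX : X → B) (f : C(E, X)) : ℕ∞ :=
  sInf {n : ℕ∞ | ∃ k : ℕ, (k : ℕ∞) = n ∧ ∃ U : Fin (k + 1) → Set X,
    (∀ i, IsOpen (U i)) ∧ (⋃ i, U i) = Set.univ ∧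
    ∀ i, ∃ s : C(U i, E), (∀ x : U i, pE (s x) = pX (x : X)) ∧
      FibHomotopic (fun x : U i => pX (x : X)) pX (f.comp s)
        ⟨Subtype.val, continuous_subtype_val⟩}

/-- The fibrewise free path space of `Y` over `B`: pairs `(b, γ)` with `p_Y ∘ γ`
constant at `b`. -/
abbrev FibPathSpace {B Y : Type*} [TopologicalSpace B] [TopologicalSpace Y] (pY : Y → B) :
    Type _ := {z : B × C(unitInterval, Y) // ∀ t, pY (z.2 t) = z.1}

/-- The `r`-fold fibred product of `Y` over `B`. -/
abbrev FibPow {B Y : Type*} [TopologicalSpace B] [TopologicalSpace Y] (pY : Y → B) (r : ℕ) :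
    Type _ := {v : Fin r → Y // ∀ i j, pY (v i) = pY (v j)}

/-- The time `i / (r - 1)` in the unit interval. -/
noncomputable def evalTime (r : ℕ) (i : Fin r) : unitInterval :=
  ⟨(i : ℝ) / ((r : ℝ) - 1), by
    have h1 : 1 ≤ r := Nat.one_le_iff_ne_zero.mpr (by rintro rfl; exact i.elim0)
    have h0 : (0:ℝ) ≤ (r:ℝ) - 1 := by
      have : (1:ℝ) ≤ (r:ℝ) := by exact_mod_cast h1
      linarith
    have hi : (i:ℝ) ≤ (r:ℝ) - 1 := by
      have h2 : ((i:ℕ):ℝ) ≤ ((r - 1 : ℕ):ℝ) := Nat.cast_le.mpr (by omega)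
      rwa [Nat.cast_sub h1, Nat.cast_one] at h2
    exact ⟨div_nonneg (by positivity) h0, div_le_one_of_le₀ hi h0⟩⟩

/-- The fibrewise evaluation fibration `Π_{r,Y} : P_B(Y) → Y_B^r`, sending `(b, γ)` to
`(γ(0), γ(1/(r-1)), …, γ(1))`. -/
noncomputable def fibPi {B Y : Type*} [TopologicalSpace B] [TopologicalSpace Y] (pY : Y → B)
    (r : ℕ) : C(FibPathSpace pY, FibPow pY r) :=
  ⟨fun z => ⟨fun i => z.1.2 (evalTime r i),
      fun i j => (z.2 (evalTime r i)).trans (z.2 (evalTime r j)).symm⟩, by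
    apply Continuous.subtype_mk
    exact continuous_pi fun i =>
      (continuous_eval_const (evalTime r i)).comp
        (continuous_snd.comp continuous_subtype_val)⟩

/-- The `i`-th projection `Y_B^r → Y`. -/
def fibPrj {B Y : Type*} [TopologicalSpace B] [TopologicalSpace Y] (pY : Y → B) (r : ℕ)
    (i : Fin r) : C(FibPow pY r, Y) :=
  ⟨fun v => v.1 i, ((continuous_apply i).comp continuous_subtype_val)⟩

open unitInterval

section FibHomotopic

variable {B X Y Z : Type*} [TopologicalSpace B] [TopologicalSpace X] [TopologicalSpace Y]
  [TopologicalSpace Z] {pX : X → B} {pY : Y → B}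

theorem FibHomotopic.symm {f g : C(X, Y)} (h : FibHomotopic pX pY f g) :
    FibHomotopic pX pY g f := by
  obtain ⟨H, hH⟩ := h
  exact ⟨H.symm, fun x t => hH x (σ t)⟩

theorem FibHomotopic.trans {f g k : C(X, Y)} (hfg : FibHomotopic pX pY f g)
    (hgk : FibHomotopic pX pY g k) : FibHomotopic pX pY f k := by
  obtain ⟨H, hH⟩ := hfg
  obtain ⟨K, hK⟩ := hgk
  refine ⟨H.trans K, fun x t => ?_⟩
  rw [ContinuousMap.Homotopy.trans_apply]
  split_ifs
  exacts [hH x _, hK x _]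

theorem FibHomotopic.comp_left {pZ : Z → B} {f g : C(X, Y)} (h : FibHomotopic pX pY f g)
    (k : C(Y, Z)) (hk : ∀ y, pZ (k y) = pY y) :
    FibHomotopic pX pZ (k.comp f) (k.comp g) := by
  obtain ⟨H, hH⟩ := h
  exact ⟨(ContinuousMap.Homotopy.refl k).comp H, fun x t => (hk _).trans (hH x t)⟩

end FibHomotopic

section FibPow

variable {B X Z : Type*} [TopologicalSpace B] [TopologicalSpace X] [TopologicalSpace Z]
  {pX : X → B} {r : ℕ} [NeZero r]

theorem fibHomotopic_of_forall_fibPrj {pZ : Z → B} {F G : C(Z, FibPow pX r)}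
    (h : ∀ i, FibHomotopic pZ pX ((fibPrj pX r i).comp F) ((fibPrj pX r i).comp G)) :
    FibHomotopic pZ (fun v : FibPow pX r => pX (v.1 0)) F G := by
  choose H hH using h
  refine ⟨⟨⟨fun p => ⟨fun i => H i p, fun i j => (hH i p.2 p.1).trans (hH j p.2 p.1).symm⟩,
    by fun_prop⟩, fun z => Subtype.ext (funext fun i => (H i).apply_zero z),
    fun z => Subtype.ext (funext fun i => (H i).apply_one z)⟩, fun z t => hH 0 z t⟩

end FibPow

section FibPathSpace

variable {B X Z : Type*} [TopologicalSpace B] [TopologicalSpace X] [TopologicalSpace Z]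
  {pX : X → B}

variable (pX) in
def fibPathEval (t : I) : C(FibPathSpace pX, X) :=
  ⟨fun z => z.1.2 t, by fun_prop⟩

variable (pX) in
def fibConstPath (hpX : Continuous pX) : C(X, FibPathSpace pX) :=
  ⟨fun x => ⟨(pX x, ContinuousMap.const I x), fun _ => rfl⟩, by fun_prop⟩

theorem fibHomotopic_fibPathEval_comp {pZ : Z → B} (s : C(Z, FibPathSpace pX))
    (hs : ∀ z, (s z).1.1 = pZ z) (t t' : I) :
    FibHomotopic pZ pX ((fibPathEval pX t).comp s) ((fibPathEval pX t').comp s) := by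
  have to_zero : ∀ t, FibHomotopic pZ pX ((fibPathEval pX t).comp s)
      ((fibPathEval pX 0).comp s) := fun t =>
    ⟨⟨⟨fun p => (s p.2).1.2 (t * σ p.1), by fun_prop⟩,
      fun z => by simp [fibPathEval], fun z => by simp [fibPathEval]⟩,
      fun z u => ((s z).2 _).trans (hs z)⟩
  exact (to_zero t).trans (to_zero t').symm

end FibPathSpace

section FibPi

variable {B X Z : Type*} [TopologicalSpace B] [TopologicalSpace X] [TopologicalSpace Z]
  {pX : X → B} {r : ℕ} [NeZero r]

theorem exists_fibPi_section_iff (hpX : Continuous pX) (φ : C(Z, FibPow pX r)) :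
    (∃ s : C(Z, FibPathSpace pX), (∀ z, (s z).1.1 = pX ((φ z).1 0)) ∧
      FibHomotopic (fun z => pX ((φ z).1 0)) (fun v : FibPow pX r => pX (v.1 0))
        ((fibPi pX r).comp s) φ) ↔
    ∀ a b, FibHomotopic (fun z => pX ((φ z).1 0)) pX
      ((fibPrj pX r a).comp φ) ((fibPrj pX r b).comp φ) := by
  constructor
  · rintro ⟨s, hs, hsφ⟩ a b
    have hprj : ∀ c, FibHomotopic (fun z => pX ((φ z).1 0)) pX
        ((fibPathEval pX (evalTime r c)).comp s) ((fibPrj pX r c).comp φ) := fun c =>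
      hsφ.comp_left (fibPrj pX r c) fun v => v.2 c 0
    exact (hprj a).symm.trans ((fibHomotopic_fibPathEval_comp s hs _ _).trans (hprj b))
  · intro h
    exact ⟨(fibConstPath pX hpX).comp ((fibPrj pX r 0).comp φ), fun _ => rfl,
      fibHomotopic_of_forall_fibPrj fun i => h 0 i⟩

end FibPi

theorem stmt16_general {B X : Type*} [TopologicalSpace B] [TopologicalSpace X]
    (r : ℕ) [NeZero r] (pX : X → B) (hpX : Continuous pX) :
    fibSecat (fun z : FibPathSpace pX => z.1.1) (fun v : FibPow pX r => pX (v.1 0))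
        (fibPi pX r) =
      fibDist (fun v : FibPow pX r => pX (v.1 0)) pX (fibPrj pX r) := by
  unfold fibSecat fibDist
  congr 1
  ext n
  refine exists_congr fun k => and_congr_right fun _ => exists_congr fun U =>
    and_congr_right fun _ => and_congr_right fun _ => forall_congr' fun i => ?_
  exact exists_fibPi_section_iff hpX ⟨Subtype.val, continuous_subtype_val⟩

/-- The sequential parametrized topological complexity `TC_{B,r}(X) = secat_B(Π_{r,X})`
equals `D_B(pr_1, …, pr_r)` for the projections of the `r`-fold fibred product. -/
theorem stmt16 {B X : Type*} [TopologicalSpace B] [TopologicalSpace X]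
    (r : ℕ) [NeZero r] (hr : 2 ≤ r) (pX : X → B) (hpX : Continuous pX) :
    fibSecat (fun z : FibPathSpace pX => z.1.1) (fun v : FibPow pX r => pX (v.1 0))
        (fibPi pX r) =
      fibDist (fun v : FibPow pX r => pX (v.1 0)) pX (fibPrj pX r) :=
  stmt16_general r pX hpX
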